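/- arXiv:1203.4419 — 3 statements merged into one kernel-verified Lean document; each statement's English description precedes it below -/
import Mathlib

section
/- For every d ≥ 0 and every n ≥ 1, the number of Ferrers diagrams in ℕ^(d+1) with exactly n elements satisfies p_d(n) = Σ_{r=0}^{n-1} C(d+1, r) · a_{n,r}, where C denotes the binomial coefficient. -/
/-- A Ferrers diagram in `ℕ^k`: a finite nonempty downward-closed subset of `Fin k → ℕ`. -/
def IsFerrers {k : ℕ} (F : Finset (Fin k → ℕ)) : Prop :=
  F.Nonempty ∧ ∀ a ∈ F, ∀ x : Fin k → ℕ, (∀ i, x i ≤ a i) → x ∈ F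

/-- A Ferrers diagram is strict if every coordinate is used by some element. -/
def IsStrict {k : ℕ} (F : Finset (Fin k → ℕ)) : Prop :=
  ∀ i : Fin k, ∃ a ∈ F, a i ≠ 0

/-- `numPart d n` = `p_d(n)`, the number of Ferrers diagrams in `ℕ^(d+1)` with `n` elements. -/
noncomputable def numPart (d n : ℕ) : ℕ :=
  Nat.card {F : Finset (Fin (d + 1) → ℕ) // IsFerrers F ∧ F.card = n}

/-- `Amat n r` = `a_{n,r}`, the number of strict Ferrers diagrams in `ℕ^r` with `n` elements. -/
noncomputable def Amat (n r : ℕ) : ℕ :=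
  Nat.card {F : Finset (Fin r → ℕ) // IsFerrers F ∧ IsStrict F ∧ F.card = n}

/-- `mu r` = `μ_r = {0, e_1, …, e_r} ⊆ ℕ^r`. -/
def mu (r : ℕ) : Finset (Fin r → ℕ) :=
  insert 0 (Finset.univ.image fun i => Pi.single i 1)

/-- The reduced dimension of a Ferrers diagram `F ⊆ ℕ^x` (containing `μ_x`): the number of
coordinates used by some element of `F \ μ_x`. -/
noncomputable def rdim {x : ℕ} (F : Finset (Fin x → ℕ)) : ℕ :=
  Nat.card {i : Fin x // ∃ a ∈ F \ mu x, a i ≠ 0}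

/-- Two coordinates are touched by a common element of the skew diagram `σ`. -/
def Touches {x : ℕ} (σ : Finset (Fin x → ℕ)) (i j : Fin x) : Prop :=
  ∃ a ∈ σ, a i ≠ 0 ∧ a j ≠ 0

/-- `B` is a block of the finest partition of `Fin x` compatible with `σ`,
i.e. an equivalence class of the equivalence relation generated by `Touches σ`. -/
def IsBlock {x : ℕ} (σ : Finset (Fin x → ℕ)) (B : Set (Fin x)) : Prop :=
  ∃ i : Fin x, B = {j | Relation.EqvGen (Touches σ) i j}

/-- The support of `a` is contained in `B`. -/
def SuppIn {x : ℕ} (a : Fin x → ℕ) (B : Set (Fin x)) : Prop :=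
  ∀ i, a i ≠ 0 → i ∈ B

/-- The component of `σ` with block `B` is of type `σ₂`: `B = {i, j}` with `i ≠ j`, and the
elements of `σ` supported in `B` are exactly `{e_i + e_j}`. -/
def IsSigma2 {x : ℕ} (σ : Finset (Fin x → ℕ)) (B : Set (Fin x)) : Prop :=
  ∃ i j : Fin x, i ≠ j ∧ B = {i, j} ∧
    {a ∈ (σ : Set (Fin x → ℕ)) | SuppIn a B} = {Pi.single i 1 + Pi.single j 1}

/-- `Cmat m x` = `c_{m,x}`. -/
noncomputable def Cmat (m x : ℕ) : ℕ :=
  Nat.card {F : Finset (Fin x → ℕ) //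
    IsFerrers F ∧ mu x ⊆ F ∧ F.card = m + x + 1 ∧ rdim F = x}

/-- `Dmat m x` = `d_{m,x}`. -/
noncomputable def Dmat (m x : ℕ) : ℕ :=
  Nat.card {F : Finset (Fin x → ℕ) //
    IsFerrers F ∧ mu x ⊆ F ∧ F.card = m + x + 1 ∧ rdim F = x ∧
      ∀ B : Set (Fin x), IsBlock (F \ mu x) B → ¬ IsSigma2 (F \ mu x) B}

/-- A point of type 1: `e_i + e_j` for some `i ≠ j`. -/
def IsType1 {r : ℕ} (a : Fin r → ℕ) : Prop :=
  ∃ i j : Fin r, i ≠ j ∧ a = Pi.single i 1 + Pi.single j 1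

/-- A point of type 2: `2·e_i` for some `i`. -/
def IsType2 {r : ℕ} (a : Fin r → ℕ) : Prop :=
  ∃ i : Fin r, a = Pi.single i 2

/-- `Fmat n r` = `f_{n,r}`. -/
noncomputable def Fmat (n r : ℕ) : ℕ :=
  Nat.card {F : Finset (Fin r → ℕ) //
    IsFerrers F ∧ mu r ⊆ F ∧ F.card = n ∧
      ∀ B : Set (Fin r), IsBlock (F \ mu r) B →
        ∃ a ∈ F \ mu r, SuppIn a B ∧ ¬ IsType1 a}

/-!
Sort the diagrams in `ℕ^(d+1)` by their support `S`. Restricting to the coordinates in `S`,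
enumerated increasingly, is a bijection (inverse: extension by zero) onto the strict diagrams in
`ℕ^|S|` with the same number of cells. There are `C(d+1, r)` supports of size `r`, and a strict
diagram in `ℕ^r` contains `0` and the `r` unit vectors, so `a_{n,r} = 0` for `r ≥ n`.
-/

open Finset Function

section Support

variable {k : ℕ}

open scoped Classical in
noncomputable def diagramSupport (F : Finset (Fin k → ℕ)) : Finset (Fin k) :=
  univ.filter fun i => ∃ a ∈ F, a i ≠ 0

theorem mem_diagramSupport {F : Finset (Fin k → ℕ)} {i : Fin k} :
    i ∈ diagramSupport F ↔ ∃ a ∈ F, a i ≠ 0 := by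
  simp [diagramSupport]

end Support

namespace IsFerrers

variable {k : ℕ} {F : Finset (Fin k → ℕ)}

theorem zero_mem (hF : IsFerrers F) : (0 : Fin k → ℕ) ∈ F := by
  obtain ⟨a, ha⟩ := hF.1
  exact hF.2 a ha 0 fun i => Nat.zero_le _

theorem apply_lt_card (hF : IsFerrers F) {a : Fin k → ℕ} (ha : a ∈ F) (i : Fin k) :
    a i < F.card := by
  have hsub : (range (a i + 1)).image (update a i) ⊆ F := by
    simp only [image_subset_iff, mem_range]
    intro t ht
    refine hF.2 a ha _ fun j => ?_
    rcases eq_or_ne j i with rfl | hj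
    · rw [update_self]; omega
    · rw [update_of_ne hj]
  have hcard := card_le_card hsub
  rw [card_image_of_injective _ (update_injective a i), card_range] at hcard
  omega

theorem subset_piFinset_range (hF : IsFerrers F) :
    F ⊆ Fintype.piFinset fun _ => range F.card := by
  intro a ha
  simpa only [Fintype.mem_piFinset, mem_range] using hF.apply_lt_card ha

theorem mu_subset_of_isStrict (hF : IsFerrers F) (hs : IsStrict F) : mu k ⊆ F := by
  intro x hx
  simp only [mu, mem_insert, mem_image, mem_univ, true_and] at hx
  rcases hx with rfl | ⟨i, rfl⟩
  · exact hF.zero_mem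
  · obtain ⟨a, ha, hai⟩ := hs i
    refine hF.2 a ha _ fun j => ?_
    rcases eq_or_ne j i with rfl | hj
    · rw [Pi.single_eq_same]; omega
    · rw [Pi.single_eq_of_ne hj]; exact Nat.zero_le _

end IsFerrers

-- `Nat.card` is `0` on infinite types, so the counts need this.
instance finite_isFerrers_card (k n : ℕ) :
    Finite {F : Finset (Fin k → ℕ) // IsFerrers F ∧ F.card = n} := by
  have hfin : {F : Finset (Fin k → ℕ) | IsFerrers F ∧ F.card = n}.Finite :=
    (Fintype.piFinset fun _ : Fin k => range n).powerset.finite_toSet.subset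
      fun F ⟨hF, hc⟩ => mem_powerset.2 (hc ▸ hF.subset_piFinset_range)
  exact hfin.to_subtype

theorem card_mu (k : ℕ) : (mu k).card = k + 1 := by
  rw [mu, card_insert_of_notMem, card_image_of_injective, card_univ, Fintype.card_fin]
  · intro i j hij
    by_contra h
    simpa [Pi.single_apply, h] using congrFun hij i
  · simp only [mem_image, mem_univ, true_and, not_exists]
    intro i hi
    simpa using congrFun hi i

theorem Amat_eq_zero_of_le {n r : ℕ} (h : n ≤ r) : Amat n r = 0 := by
  rw [Amat, Nat.card_eq_zero]
  left
  refine ⟨fun ⟨F, hF, hs, hc⟩ => ?_⟩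
  have hcard := card_le_card (hF.mu_subset_of_isStrict hs)
  rw [card_mu] at hcard
  omega

section Restrict

variable {k r : ℕ} {e : Fin r → Fin k}

theorem mem_range_of_extend_ne_zero {b : Fin r → ℕ} {i : Fin k} (h : extend e b 0 i ≠ 0) :
    i ∈ Set.range e := by
  by_contra hi
  exact h (extend_apply' (f := e) b 0 i hi)

theorem extend_comp_of_support_subset {a : Fin k → ℕ} (he : Injective e)
    (ha : ∀ i, a i ≠ 0 → i ∈ Set.range e) : extend e (a ∘ e) 0 = a := by
  funext i
  by_cases hi : i ∈ Set.range e
  · obtain ⟨j, rfl⟩ := hi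
    exact he.extend_apply _ _ j
  · rw [extend_apply' _ _ i hi]
    by_contra h
    exact hi (ha i (Ne.symm h))

theorem extend_le_extend (he : Injective e) {b c : Fin r → ℕ} (h : b ≤ c) :
    extend e b 0 ≤ extend e c 0 := by
  intro i
  by_cases hi : i ∈ Set.range e
  · obtain ⟨j, rfl⟩ := hi
    simpa only [he.extend_apply] using h j
  · simp only [extend_apply' _ _ i hi, le_refl]

variable {F : Finset (Fin k → ℕ)} {G : Finset (Fin r → ℕ)}

theorem extend_comp_of_mem (he : Injective e) (hS : ↑(diagramSupport F) ⊆ Set.range e)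
    {a : Fin k → ℕ} (ha : a ∈ F) : extend e (a ∘ e) 0 = a :=
  extend_comp_of_support_subset he fun _ hi => hS (mem_diagramSupport.2 ⟨a, ha, hi⟩)

theorem IsFerrers.image_comp (he : Injective e) (hF : IsFerrers F)
    (hS : ↑(diagramSupport F) ⊆ Set.range e) : IsFerrers (F.image (· ∘ e)) := by
  refine ⟨hF.1.image _, ?_⟩
  simp only [forall_mem_image]
  intro a ha y hy
  have hle : extend e y 0 ≤ a := by
    simpa only [extend_comp_of_mem he hS ha] using extend_le_extend he (b := y) (c := a ∘ e) hy
  exact mem_image.2 ⟨extend e y 0, hF.2 a ha _ hle, extend_comp he _ _⟩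

theorem IsFerrers.image_extend (he : Injective e) (hG : IsFerrers G) :
    IsFerrers (G.image (extend e · 0)) := by
  refine ⟨hG.1.image _, ?_⟩
  simp only [forall_mem_image]
  intro b hb x hx
  have hxe : x ∘ e ∈ G := hG.2 b hb _ fun j => by
    simpa only [comp_apply, he.extend_apply] using hx (e j)
  have hx_supp : ∀ i, x i ≠ 0 → i ∈ Set.range e := fun i hi =>
    mem_range_of_extend_ne_zero fun h => hi (Nat.le_zero.1 (h ▸ hx i))
  exact mem_image.2 ⟨x ∘ e, hxe, extend_comp_of_support_subset he hx_supp⟩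

theorem isStrict_image_comp (hS : Set.range e ⊆ ↑(diagramSupport F)) :
    IsStrict (F.image (· ∘ e)) := by
  intro j
  obtain ⟨a, ha, hne⟩ := mem_diagramSupport.1 (hS ⟨j, rfl⟩)
  exact ⟨a ∘ e, mem_image_of_mem _ ha, hne⟩

theorem coe_diagramSupport_image_extend (he : Injective e) (hG : IsStrict G) :
    ↑(diagramSupport (G.image (extend e · 0))) = Set.range e := by
  ext i
  rw [mem_coe, mem_diagramSupport]
  constructor
  · rintro ⟨a, ha, hne⟩
    obtain ⟨b, -, rfl⟩ := mem_image.1 ha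
    exact mem_range_of_extend_ne_zero hne
  · rintro ⟨j, rfl⟩
    obtain ⟨b, hb, hne⟩ := hG j
    exact ⟨_, mem_image_of_mem _ hb, by rwa [he.extend_apply]⟩

theorem image_extend_image_comp (he : Injective e) (hS : ↑(diagramSupport F) ⊆ Set.range e) :
    (F.image (· ∘ e)).image (extend e · 0) = F := by
  rw [image_image]
  exact (image_congr fun a ha => extend_comp_of_mem he hS ha).trans image_id

theorem image_comp_image_extend (he : Injective e) :
    (G.image (extend e · 0)).image (· ∘ e) = G := by
  rw [image_image]
  exact (image_congr fun b _ => extend_comp he b 0).trans image_id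

theorem card_image_comp (he : Injective e) (hS : ↑(diagramSupport F) ⊆ Set.range e) :
    (F.image (· ∘ e)).card = F.card := by
  refine le_antisymm card_image_le ?_
  conv_lhs => rw [← image_extend_image_comp he hS]
  exact card_image_le

theorem card_image_extend (he : Injective e) : (G.image (extend e · 0)).card = G.card :=
  card_image_of_injective _ (extend_injective he 0)

variable (n : ℕ)

noncomputable def restrictEquiv (he : Injective e) :
    {F : Finset (Fin k → ℕ) //
        (IsFerrers F ∧ F.card = n) ∧ ↑(diagramSupport F) = Set.range e} ≃
      {G : Finset (Fin r → ℕ) // IsFerrers G ∧ IsStrict G ∧ G.card = n} where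
  toFun F :=
    ⟨F.1.image (· ∘ e), F.2.1.1.image_comp he F.2.2.le, isStrict_image_comp F.2.2.ge,
      (card_image_comp he F.2.2.le).trans F.2.1.2⟩
  invFun G :=
    ⟨G.1.image (extend e · 0),
      ⟨G.2.1.image_extend he, (card_image_extend he).trans G.2.2.2⟩,
      coe_diagramSupport_image_extend he G.2.2.1⟩
  left_inv F := Subtype.ext (image_extend_image_comp he F.2.2.le)
  right_inv _ := Subtype.ext (image_comp_image_extend he)

end Restrict

theorem numPart_eq_sum_Amat_card (d n : ℕ) :
    numPart d n = ∑ S : Finset (Fin (d + 1)), Amat n S.card := by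
  rw [numPart, ← Nat.card_congr (Equiv.sigmaFiberEquiv
    fun F : {F : Finset (Fin (d + 1) → ℕ) // IsFerrers F ∧ F.card = n} => diagramSupport F.1),
    Nat.card_sigma]
  refine sum_congr rfl fun S _ => ?_
  rw [Amat, ← Nat.card_congr (restrictEquiv n (S.orderEmbOfFin rfl).injective)]
  refine Nat.card_congr ((Equiv.subtypeSubtypeEquivSubtypeInter
    (fun F => IsFerrers F ∧ F.card = n) (diagramSupport · = S)).trans
    (Equiv.subtypeEquivRight fun F => ?_))
  rw [range_orderEmbOfFin, coe_inj]

theorem statement0_general (d n : ℕ) :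
    numPart d n = ∑ r ∈ Finset.range n, Nat.choose (d + 1) r * Amat n r := by
  rw [numPart_eq_sum_Amat_card, ← powerset_univ, sum_powerset_apply_card, card_univ,
    Fintype.card_fin]
  simp only [smul_eq_mul]
  have hd : range (d + 1 + 1) ⊆ range (n + d + 2) := range_subset_range.2 (by omega)
  have hn : range n ⊆ range (n + d + 2) := range_subset_range.2 (by omega)
  rw [sum_subset hd, sum_subset hn]
  · intro r _ hr
    rw [Amat_eq_zero_of_le (not_lt.1 (mem_range.not.1 hr)), mul_zero]
  · intro r _ hr
    rw [Nat.choose_eq_zero_of_lt (by simpa using hr), zero_mul]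

/-- `p_d(n) = Σ_{r=0}^{n-1} C(d+1, r) · a_{n,r}` for all `d ≥ 0`, `n ≥ 1`. -/
theorem statement0 (d n : ℕ) (hn : 1 ≤ n) :
    numPart d n = ∑ r ∈ Finset.range n, Nat.choose (d + 1) r * Amat n r :=
  statement0_general d n
end

section
/- For every m ≥ 1, c_{m,2m} = (2m − 1)!! = (2m)! / (2^m · m!); that is, the number of Ferrers diagrams λ ⊆ ℕ^(2m) with 3m + 1 elements containing μ_{2m} and having reduced dimension 2m equals (2m)! / (2^m · m!). -/
open Finset Equiv
open scoped Nat

theorem Equiv.Perm.cycleType_eq_replicate_two_iff {α : Type*} [Fintype α] [DecidableEq α]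
    {n : ℕ} (hα : Fintype.card α = 2 * n) (g : Perm α) :
    g.cycleType = Multiset.replicate n 2 ↔ ∀ x, g (g x) = x ∧ g x ≠ x := by
  have hsq : g ^ 2 = 1 ↔ ∀ x, g (g x) = x := by
    simp [Perm.ext_iff, sq]
  have hsupp : g.support = univ ↔ ∀ x, g x ≠ x := by
    simp [eq_univ_iff_forall]
  rw [forall_and, ← hsq, ← hsupp]
  constructor
  · intro h
    refine ⟨Perm.pow_prime_eq_one_iff.2 fun c hc => ?_, ?_⟩
    · rw [h] at hc; exact Multiset.eq_of_mem_replicate hc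
    · apply eq_univ_of_card
      rw [← Perm.sum_cycleType, h, Multiset.sum_replicate, hα, smul_eq_mul, mul_comm]
  · rintro ⟨h2, hu⟩
    have hct := Perm.cycleType_of_pow_prime_eq_one h2
    have hsum := g.sum_cycleType
    rw [hct, Multiset.sum_replicate, hu, Finset.card_univ, hα, smul_eq_mul] at hsum
    rw [hct, show Multiset.card g.cycleType = n by omega]

theorem Equiv.Perm.card_of_cycleType_replicate_two {α : Type*} [Fintype α] [DecidableEq α]
    {n : ℕ} (hα : Fintype.card α = 2 * n) :
    #({g | g.cycleType = Multiset.replicate n 2} : Finset (Perm α)) = (2 * n)! / (2 ^ n * n !) := by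
  rw [Perm.card_of_cycleType, if_pos ⟨by simp [hα, mul_comm],
    fun a ha => (Multiset.eq_of_mem_replicate ha).ge⟩, hα]
  rcases eq_or_ne n 0 with rfl | hn
  · simp
  · simp [hn, mul_comm]

theorem Finset.card_filter_eq_of_mul_card_image_le {α β : Type*} [DecidableEq β] {f : α → β}
    {s : Finset α} {n : ℕ} (hn : ∀ b ∈ s.image f, #{a ∈ s | f a = b} ≤ n)
    (hs : n * #(s.image f) ≤ #s) : ∀ b ∈ s.image f, #{a ∈ s | f a = b} = n := by
  refine (sum_eq_sum_iff_of_le hn).1 (le_antisymm (sum_le_sum hn) ?_)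
  rwa [sum_const, smul_eq_mul, mul_comm, ← card_eq_sum_card_image]

theorem eq_of_le_of_sum_le {ι : Type*} [Fintype ι] {x a : ι → ℕ} (h : x ≤ a)
    (hs : ∑ i, a i ≤ ∑ i, x i) : x = a :=
  funext fun i => (sum_eq_sum_iff_of_le fun i _ => h i).1
    (le_antisymm (sum_le_sum fun i _ => h i) hs) i (mem_univ i)

namespace FerrersDiagram

variable {r : ℕ}

/-- `e_i + e_j`; for `i = j` this is `2 e_i`, so these are exactly the points of degree two. -/
def pair (i j : Fin r) : Fin r → ℕ := Pi.single i 1 + Pi.single j 1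

lemma sum_pair (i j : Fin r) : ∑ k, pair i j k = 2 := by
  simp [pair, sum_add_distrib]

lemma pair_apply_ne_zero {i j k : Fin r} : pair i j k ≠ 0 ↔ k = i ∨ k = j := by
  by_cases hi : k = i <;> by_cases hj : k = j <;> simp [pair, Pi.single_apply, hi, hj]

lemma pair_eq_pair_iff {i j k l : Fin r} :
    pair i j = pair k l ↔ i = k ∧ j = l ∨ i = l ∧ j = k := by
  constructor
  · intro h
    have hi := congrFun h i
    have hj := congrFun h j
    have hk := congrFun h k
    simp only [pair, Pi.add_apply, Pi.single_apply] at hi hj hk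
    grind
  · rintro (⟨rfl, rfl⟩ | ⟨rfl, rfl⟩)
    · rfl
    · exact add_comm _ _

lemma single_one_le {a : Fin r → ℕ} {i : Fin r} (hi : a i ≠ 0) : Pi.single i 1 ≤ a := by
  intro k
  rcases eq_or_ne k i with rfl | hk
  · simpa [Nat.one_le_iff_ne_zero]
  · simp [hk]

lemma mem_mu_iff_sum_le_one {a : Fin r → ℕ} : a ∈ mu r ↔ ∑ i, a i ≤ 1 := by
  simp only [mu, mem_insert, mem_image, mem_univ, true_and]
  refine ⟨by rintro (rfl | ⟨i, rfl⟩) <;> simp, fun h => ?_⟩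
  by_cases ha : a = 0
  · exact .inl ha
  · obtain ⟨i, hi⟩ := Function.ne_iff.1 ha
    exact .inr ⟨i, eq_of_le_of_sum_le (single_one_le hi) (by simpa using h)⟩

lemma pair_notMem_mu (i j : Fin r) : pair i j ∉ mu r := by
  simp [mem_mu_iff_sum_le_one, sum_pair]

lemma card_mu (r : ℕ) : #(mu r) = r + 1 := by
  have hinj : Function.Injective fun i : Fin r => (Pi.single i 1 : Fin r → ℕ) :=
    fun i j h => by simpa [Pi.single_apply, eq_comm] using congrFun h j
  rw [mu, card_insert_of_notMem, card_image_of_injective _ hinj, card_univ, Fintype.card_fin]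
  simp [funext_iff, Pi.single_apply]

lemma exists_pair_le {a : Fin r → ℕ} {i : Fin r} (hi : a i ≠ 0) (ha : 2 ≤ ∑ k, a k) :
    ∃ j, pair i j ≤ a := by
  obtain ⟨j, hj⟩ : ∃ j, (a - Pi.single i 1 : Fin r → ℕ) j ≠ 0 := by
    by_contra! h
    have : ∑ k, a k ≤ ∑ k, (Pi.single i 1 : Fin r → ℕ) k :=
      sum_le_sum fun k _ => tsub_eq_zero_iff_le.1 (h k)
    simp only [sum_pi_single', mem_univ, ↓reduceIte] at this
    omega
  exact ⟨j, (le_tsub_iff_left (single_one_le hi)).1 (single_one_le hj)⟩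

lemma rdim_eq_iff {F : Finset (Fin r → ℕ)} : rdim F = r ↔ ∀ i, ∃ a ∈ F \ mu r, a i ≠ 0 := by
  rw [rdim, Nat.card_eq_fintype_card, Fintype.card_subtype]
  simpa using card_filter_eq_iff (s := univ) (p := fun i : Fin r => ∃ a ∈ F \ mu r, a i ≠ 0)

lemma isFerrers_mu_union {S : Finset (Fin r → ℕ)} (hS : ∀ a ∈ S, ∑ i, a i = 2) :
    IsFerrers (mu r ∪ S) := by
  refine ⟨⟨0, mem_union_left _ (mem_insert_self _ _)⟩, fun a ha x hx => ?_⟩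
  have ha2 : ∑ i, a i ≤ 2 := by
    rcases mem_union.1 ha with ha | ha
    · exact (mem_mu_iff_sum_le_one.1 ha).trans one_le_two
    · exact (hS a ha).le
  by_cases hx1 : ∑ i, x i ≤ 1
  · exact mem_union_left _ (mem_mu_iff_sum_le_one.2 hx1)
  · rwa [eq_of_le_of_sum_le hx (by omega)]

lemma eq_image_pair_of_two_mul_card_le {σ : Finset (Fin r → ℕ)} {g : Fin r → Fin r}
    (hg : ∀ i, pair i (g i) ∈ σ) (hσ : 2 * #σ ≤ r) :
    (∀ i, g (g i) = i ∧ g i ≠ i) ∧ σ = univ.image fun i => pair i (g i) := by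
  have hfiber (i : Fin r) : ({k | pair k (g k) = pair i (g i)} : Finset _) ⊆ {i, g i} := by
    intro k hk
    simp only [mem_filter, mem_univ, true_and, pair_eq_pair_iff] at hk
    grind
  have hle : ∀ b ∈ univ.image fun i => pair i (g i), #{k | pair k (g k) = b} ≤ 2 := by
    intro b hb
    obtain ⟨i, -, rfl⟩ := mem_image.1 hb
    exact (card_le_card (hfiber i)).trans card_le_two
  have himage_eq : (univ.image fun i => pair i (g i)) = σ := by
    refine eq_of_subset_of_card_le (fun b hb => ?_) ?_
    · obtain ⟨i, -, rfl⟩ := mem_image.1 hb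
      exact hg i
    · have := card_le_mul_card_image univ 2 hle
      rw [card_univ, Fintype.card_fin] at this
      omega
  have hfiber_card := card_filter_eq_of_mul_card_image_le hle (by
    rw [card_univ, Fintype.card_fin, himage_eq]; exact hσ)
  refine ⟨fun i => ?_, himage_eq.symm⟩
  have hcard : #{k | pair k (g k) = pair i (g i)} = 2 :=
    hfiber_card _ (mem_image_of_mem _ (mem_univ i))
  have hpair := eq_of_subset_of_card_le (hfiber i) (by rw [hcard]; exact card_le_two)
  have hne : g i ≠ i := by
    rintro heq
    rw [hpair, heq, insert_eq_of_mem (mem_singleton_self i), card_singleton] at hcard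
    omega
  have hgi : g i ∈ ({i, g i} : Finset (Fin r)) := mem_insert_of_mem (mem_singleton_self _)
  rw [← hpair, mem_filter, pair_eq_pair_iff] at hgi
  grind

def pairDiagram (g : Fin r → Fin r) : Finset (Fin r → ℕ) :=
  mu r ∪ univ.image fun i => pair i (g i)

lemma isFerrers_pairDiagram (g : Fin r → Fin r) : IsFerrers (pairDiagram g) :=
  isFerrers_mu_union fun a ha => by
    obtain ⟨i, -, rfl⟩ := mem_image.1 ha
    exact sum_pair i (g i)

lemma disjoint_mu_image_pair (g : Fin r → Fin r) :
    Disjoint (mu r) (univ.image fun i => pair i (g i)) :=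
  disjoint_right.2 fun a ha => by
    obtain ⟨i, -, rfl⟩ := mem_image.1 ha
    exact pair_notMem_mu i (g i)

lemma pairDiagram_sdiff_mu (g : Fin r → Fin r) :
    pairDiagram g \ mu r = univ.image fun i => pair i (g i) :=
  union_sdiff_cancel_left (disjoint_mu_image_pair g)

lemma card_pairDiagram (g : Fin r → Fin r) :
    #(pairDiagram g) = r + 1 + #(univ.image fun i => pair i (g i)) := by
  rw [pairDiagram, card_union_of_disjoint (disjoint_mu_image_pair g), card_mu]

lemma rdim_pairDiagram (g : Fin r → Fin r) : rdim (pairDiagram g) = r :=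
  rdim_eq_iff.2 fun i => ⟨pair i (g i), by simp [pairDiagram_sdiff_mu],
    pair_apply_ne_zero.2 (.inl rfl)⟩

lemma two_mul_card_image_pair {g : Fin r → Fin r} (hg : ∀ i, g (g i) = i ∧ g i ≠ i) :
    2 * #(univ.image fun i => pair i (g i)) = r := by
  have hfiber : ∀ b ∈ univ.image fun i => pair i (g i), #{k | pair k (g k) = b} = 2 := by
    intro b hb
    obtain ⟨i, -, rfl⟩ := mem_image.1 hb
    have : ({k | pair k (g k) = pair i (g i)} : Finset _) = {i, g i} := by
      ext k
      simp only [mem_filter, mem_univ, true_and, pair_eq_pair_iff, mem_insert, mem_singleton]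
      grind
    rw [this, card_pair (hg i).2.symm]
  calc 2 * #(univ.image fun i => pair i (g i))
      _ = ∑ b ∈ univ.image fun i => pair i (g i), #{k | pair k (g k) = b} := by
        rw [sum_congr rfl hfiber, sum_const, smul_eq_mul, mul_comm]
      _ = r := by rw [← card_eq_sum_card_image, card_univ, Fintype.card_fin]

lemma eq_of_pairDiagram_eq {g h : Fin r → Fin r} (hh : Function.Involutive h)
    (hgh : pairDiagram g = pairDiagram h) : g = h := by
  funext i
  have : pair i (g i) ∈ univ.image fun j => pair j (h j) := by
    rw [← pairDiagram_sdiff_mu, ← hgh, pairDiagram_sdiff_mu]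
    exact mem_image_of_mem _ (mem_univ i)
  obtain ⟨j, -, hj⟩ := mem_image.1 this
  rw [pair_eq_pair_iff] at hj
  rcases hj with ⟨rfl, hj⟩ | ⟨hi, hj⟩
  · exact hj.symm
  · exact hi.symm.trans ((congrArg h hj).symm.trans (hh j)).symm

lemma exists_eq_pairDiagram {F : Finset (Fin r → ℕ)} (hF : IsFerrers F) (hmu : mu r ⊆ F)
    (hcard : 2 * #(F \ mu r) ≤ r) (hcover : ∀ i, ∃ a ∈ F \ mu r, a i ≠ 0) :
    ∃ g : Fin r → Fin r, (∀ i, g (g i) = i ∧ g i ≠ i) ∧ F = pairDiagram g := by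
  have hpair (i : Fin r) : ∃ j, pair i j ∈ F \ mu r := by
    obtain ⟨a, ha, hai⟩ := hcover i
    rw [mem_sdiff, mem_mu_iff_sum_le_one, not_le] at ha
    obtain ⟨j, hj⟩ := exists_pair_le hai ha.2
    exact ⟨j, mem_sdiff.2 ⟨hF.2 a ha.1 _ hj, pair_notMem_mu i j⟩⟩
  choose g hg using hpair
  obtain ⟨hinv, hσ⟩ := eq_image_pair_of_two_mul_card_le hg hcard
  exact ⟨g, hinv, by rw [pairDiagram, ← hσ, union_sdiff_of_subset hmu]⟩

theorem cmat_two_mul_eq_card (m : ℕ) :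
    Cmat m (2 * m) = Nat.card {g : Perm (Fin (2 * m)) // ∀ i, g (g i) = i ∧ g i ≠ i} := by
  have card_eq (g : Fin (2 * m) → Fin (2 * m)) (hg : ∀ i, g (g i) = i ∧ g i ≠ i) :
      #(pairDiagram g) = m + 2 * m + 1 := by
    have := two_mul_card_image_pair hg
    rw [card_pairDiagram]
    omega
  refine (Nat.card_eq_of_bijective (fun g => ⟨pairDiagram g.1, isFerrers_pairDiagram g.1,
    subset_union_left, card_eq g.1 g.2, rdim_pairDiagram g.1⟩) ⟨fun g h hgh => ?_, ?_⟩).symm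
  · exact Subtype.ext <| DFunLike.coe_injective <|
      eq_of_pairDiagram_eq (fun i => (h.2 i).1) (congrArg Subtype.val hgh)
  · rintro ⟨F, hF, hmu, hcard, hrdim⟩
    have hσ : #(F \ mu (2 * m)) = m := by
      rw [card_sdiff_of_subset hmu, hcard, card_mu]
      omega
    obtain ⟨g, hg, rfl⟩ := exists_eq_pairDiagram hF hmu (by omega) (rdim_eq_iff.1 hrdim)
    exact ⟨⟨Function.Involutive.toPerm g fun i => (hg i).1, hg⟩, rfl⟩

end FerrersDiagram

theorem statement6_general (m : ℕ) :
    Cmat m (2 * m) = Nat.factorial (2 * m) / (2 ^ m * Nat.factorial m) := by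
  have hcard : Fintype.card (Fin (2 * m)) = 2 * m := Fintype.card_fin _
  rw [FerrersDiagram.cmat_two_mul_eq_card, Nat.card_eq_fintype_card, Fintype.card_subtype,
    ← Perm.card_of_cycleType_replicate_two hcard]
  simp_rw [Perm.cycleType_eq_replicate_two_iff hcard]

/-- `c_{m,2m} = (2m−1)!! = (2m)! / (2^m · m!)` for every `m ≥ 1`. -/
theorem statement6 (m : ℕ) (hm : 1 ≤ m) :
    Cmat m (2 * m) = Nat.factorial (2 * m) / (2 ^ m * Nat.factorial m) :=
  statement6_general m
end

section
/- For every m ≥ 0 and r ≥ 0, a_{m+r+1,r} = Σ_{x=0}^{r} Σ_{p=0}^{m} C(r, x) · C( C(r−x, 2), m−p ) · f_{p+x+1,x}, where C denotes the binomial coefficient. -/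
/-!
A Ferrers diagram `λ ⊆ ℕ^r` is strict exactly when it contains `μ_r`. Call the *core* of
`σ = λ ∖ μ_r` the union of the blocks whose component has a point not of type 1. Every point of
`σ` is then either supported in the core `S`, or is a type-1 point `e_i + e_j` with `i, j ∉ S`
forming a component by itself. Renumbering `S` as `Fin x`, the points supported in `S` form,
together with `μ_x`, a diagram counted by `f_{p+x+1,x}`, while the other points are an arbitrary set
of `m - p` pairs outside `S`. Conversely, gluing such data always gives a Ferrers diagram (a type-1
point only covers points of `μ_r`) whose core is `S`, so `λ ↦ (S, p, pairs, λ restricted to S)` is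
a bijection, and there are `C(r, x)` choices of `S` and `C(C(r - x, 2), m - p)` of the pairs.
-/

namespace FerrersDecomposition

open Finset Function Relation

variable {r x : ℕ}

section Points

def supp (a : Fin r → ℕ) : Finset (Fin r) := univ.filter (a · ≠ 0)

def ones (t : Finset (Fin r)) : Fin r → ℕ := fun i => if i ∈ t then 1 else 0

@[simp] lemma mem_supp {a : Fin r → ℕ} {i : Fin r} : i ∈ supp a ↔ a i ≠ 0 := by
  simp [supp]

@[simp] lemma supp_ones (t : Finset (Fin r)) : supp (ones t) = t := by
  ext i
  by_cases hi : i ∈ t <;> simp [ones, hi]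

lemma ones_injective : Injective (ones (r := r)) := fun s t h => by
  rw [← supp_ones s, h, supp_ones]

lemma supp_subset_of_le {a y : Fin r → ℕ} (hy : y ≤ a) : supp y ⊆ supp a := fun i hi =>
  mem_supp.mpr (Nat.pos_iff_ne_zero.mp ((Nat.pos_of_ne_zero (mem_supp.mp hi)).trans_le (hy i)))

lemma ones_supp_of_le_ones {y : Fin r → ℕ} {t : Finset (Fin r)} (hy : y ≤ ones t) :
    ones (supp y) = y ∧ supp y ⊆ t := by
  refine ⟨funext fun i => ?_, fun i hi => ?_⟩
  · have := hy i
    by_cases hi : i ∈ t <;> by_cases hyi : y i = 0 <;> simp_all [ones]; omega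
  · by_contra hit
    simpa [ones, hit] using (mem_supp.mp hi).bot_lt.trans_le (hy i)

lemma ones_pair {i j : Fin r} (hij : i ≠ j) :
    ones {i, j} = Pi.single i 1 + Pi.single j 1 := by
  funext k
  by_cases hki : k = i <;> by_cases hkj : k = j <;> simp_all [ones]

lemma ones_empty : ones (∅ : Finset (Fin r)) = 0 := funext fun _ => by simp [ones]

lemma ones_singleton (i : Fin r) : ones {i} = Pi.single i 1 :=
  funext fun k => by simp [ones, Pi.single_apply]

lemma mem_mu_iff {a : Fin r → ℕ} :
    a ∈ mu r ↔ ∃ t : Finset (Fin r), #t ≤ 1 ∧ ones t = a := by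
  simp only [mu, mem_insert, mem_image, mem_univ, true_and]
  constructor
  · rintro (rfl | ⟨i, rfl⟩)
    · exact ⟨∅, by simp, ones_empty⟩
    · exact ⟨{i}, by simp, ones_singleton i⟩
  · rintro ⟨t, ht, rfl⟩
    rcases Nat.le_one_iff_eq_zero_or_eq_one.mp ht with ht | ht
    · exact .inl (by rw [card_eq_zero.mp ht, ones_empty])
    · obtain ⟨i, rfl⟩ := card_eq_one.mp ht
      exact .inr ⟨i, (ones_singleton i).symm⟩

lemma isType1_iff {a : Fin r → ℕ} :
    IsType1 a ↔ ∃ t : Finset (Fin r), #t = 2 ∧ ones t = a := by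
  constructor
  · rintro ⟨i, j, hij, rfl⟩
    exact ⟨{i, j}, card_pair hij, ones_pair hij⟩
  · rintro ⟨t, ht, rfl⟩
    obtain ⟨i, j, hij, rfl⟩ := card_eq_two.mp ht
    exact ⟨i, j, hij, ones_pair hij⟩

lemma IsType1.ones_supp {a : Fin r → ℕ} (h : IsType1 a) : ones (supp a) = a := by
  obtain ⟨t, -, rfl⟩ := isType1_iff.mp h
  rw [supp_ones]

lemma IsType1.card_supp {a : Fin r → ℕ} (h : IsType1 a) : #(supp a) = 2 := by
  obtain ⟨t, ht, rfl⟩ := isType1_iff.mp h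
  rw [supp_ones, ht]

lemma zero_mem_mu : (0 : Fin r → ℕ) ∈ mu r := mem_insert_self _ _

lemma single_mem_mu (i : Fin r) : Pi.single i 1 ∈ mu r :=
  mem_insert_of_mem (mem_image_of_mem _ (mem_univ i))

lemma card_mu : #(mu r) = r + 1 := by
  have hinj : Injective fun i : Fin r => (Pi.single i 1 : Fin r → ℕ) := fun i j h => by
    simp only [← ones_singleton] at h
    exact singleton_injective (ones_injective h)
  rw [mu, card_insert_of_notMem, card_image_of_injective _ hinj, card_univ, Fintype.card_fin]
  simp [funext_iff, Pi.single_apply]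

lemma ones_notMem_mu {t : Finset (Fin r)} (ht : #t = 2) : ones t ∉ mu r := by
  rintro h
  obtain ⟨s, hs, hst⟩ := mem_mu_iff.mp h
  rw [ones_injective hst] at hs
  omega

lemma mem_mu_of_le {a y : Fin r → ℕ} (ha : a ∈ mu r) (hy : y ≤ a) : y ∈ mu r := by
  obtain ⟨t, ht, rfl⟩ := mem_mu_iff.mp ha
  obtain ⟨hy, hyt⟩ := ones_supp_of_le_ones hy
  exact mem_mu_iff.mpr ⟨supp y, (card_le_card hyt).trans ht, hy⟩

lemma mem_mu_or_eq_of_le_ones {t : Finset (Fin r)} (ht : #t = 2) {y : Fin r → ℕ}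
    (hy : y ≤ ones t) : y ∈ mu r ∨ y = ones t := by
  obtain ⟨hy, hyt⟩ := ones_supp_of_le_ones hy
  by_cases hcard : #(supp y) ≤ 1
  · exact .inl (mem_mu_iff.mpr ⟨_, hcard, hy⟩)
  · rw [← hy, eq_of_subset_of_card_le hyt (by omega)]
    exact .inr rfl

end Points

section Extend

variable (e : Fin x ↪ Fin r)

noncomputable def extendZero (b : Fin x → ℕ) : Fin r → ℕ := extend e b 0

@[simp] lemma extendZero_apply (b : Fin x → ℕ) (k : Fin x) : extendZero e b (e k) = b k :=
  e.injective.extend_apply _ _ _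

lemma extendZero_injective : Injective (extendZero e) := extend_injective e.injective 0

lemma supp_extendZero (b : Fin x → ℕ) : supp (extendZero e b) = (supp b).map e := by
  ext i
  by_cases hi : ∃ k, e k = i
  · obtain ⟨k, rfl⟩ := hi
    simp
  · simp [extendZero, extend_apply' _ _ _ hi]
    grind

lemma extendZero_comp_of_supp_subset {a : Fin r → ℕ} (ha : supp a ⊆ univ.map e) :
    extendZero e (a ∘ e) = a := by
  funext i
  by_cases hi : ∃ k, e k = i
  · obtain ⟨k, rfl⟩ := hi
    simp
  · rw [extendZero, extend_apply' _ _ _ hi]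
    by_contra hai
    simpa using hi (by simpa using ha (mem_supp.mpr (Ne.symm hai)))

lemma supp_extendZero_subset (b : Fin x → ℕ) : supp (extendZero e b) ⊆ univ.map e := by
  simp [supp_extendZero, map_subset_map]

lemma mem_range_extendZero {a : Fin r → ℕ} :
    a ∈ Set.range (extendZero e) ↔ supp a ⊆ univ.map e := by
  constructor
  · rintro ⟨b, rfl⟩
    exact supp_extendZero_subset e b
  · exact fun ha => ⟨a ∘ e, extendZero_comp_of_supp_subset e ha⟩

lemma extendZero_mono {b b' : Fin x → ℕ} (h : b ≤ b') :
    extendZero e b ≤ extendZero e b' := by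
  intro i
  by_cases hi : ∃ k, e k = i
  · obtain ⟨k, rfl⟩ := hi
    simpa using h k
  · simp [extendZero, extend_apply' _ _ _ hi]

lemma extendZero_ones (t : Finset (Fin x)) : extendZero e (ones t) = ones (t.map e) := by
  rw [← extendZero_comp_of_supp_subset e (a := ones (t.map e)) (by simp [map_subset_map])]
  congr 1
  funext k
  simp [ones]

lemma exists_ones_eq_extendZero_iff (P : ℕ → Prop) (b : Fin x → ℕ) :
    (∃ t, P #t ∧ ones t = extendZero e b) ↔ ∃ s, P #s ∧ ones s = b := by
  constructor
  · rintro ⟨t, ht, hb⟩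
    have hts : t = (supp b).map e := by rw [← supp_extendZero, ← hb, supp_ones]
    refine ⟨supp b, by rwa [hts, card_map] at ht, extendZero_injective e ?_⟩
    rw [extendZero_ones, ← hts, hb]
  · rintro ⟨s, hs, rfl⟩
    exact ⟨s.map e, by rwa [card_map], (extendZero_ones e s).symm⟩

lemma extendZero_mem_mu_iff {b : Fin x → ℕ} : extendZero e b ∈ mu r ↔ b ∈ mu x := by
  rw [mem_mu_iff, mem_mu_iff, exists_ones_eq_extendZero_iff e (· ≤ 1)]

lemma isType1_extendZero_iff {b : Fin x → ℕ} : IsType1 (extendZero e b) ↔ IsType1 b := by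
  rw [isType1_iff, isType1_iff, exists_ones_eq_extendZero_iff e (· = 2)]

lemma touches_image_extendZero (σ : Finset (Fin x → ℕ)) :
    Touches (σ.image (extendZero e)) = Relation.Map (Touches σ) e e := by
  ext i j
  constructor
  · rintro ⟨_, hb', hi, hj⟩
    obtain ⟨b, hb, rfl⟩ := mem_image.mp hb'
    rw [← mem_supp, supp_extendZero, mem_map] at hi hj
    obtain ⟨k, hk, rfl⟩ := hi
    obtain ⟨l, hl, rfl⟩ := hj
    exact ⟨k, l, ⟨b, hb, mem_supp.mp hk, mem_supp.mp hl⟩, rfl, rfl⟩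
  · rintro ⟨k, l, ⟨b, hb, hk, hl⟩, rfl, rfl⟩
    exact ⟨extendZero e b, mem_image_of_mem _ hb, by simpa using hk, by simpa using hl⟩

noncomputable def restrict (F : Finset (Fin r → ℕ)) : Finset (Fin x → ℕ) :=
  F.preimage (extendZero e) (extendZero_injective e).injOn

variable {e} in
@[simp] lemma mem_restrict {F : Finset (Fin r → ℕ)} {b : Fin x → ℕ} :
    b ∈ restrict e F ↔ extendZero e b ∈ F :=
  mem_preimage

end Extend

section Blocks

lemma eqvGen_map_iff {α β : Type*} {R : α → α → Prop} {f : α → β} (hf : Injective f)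
    {a b : α} :
    EqvGen (Relation.Map R f f) (f a) (f b) ↔ EqvGen R a b := by
  constructor
  · have key : ∀ u v, EqvGen (Relation.Map R f f) u v →
        u = v ∨ ∃ a b, f a = u ∧ f b = v ∧ EqvGen R a b := by
      intro u v h
      induction h with
      | rel _ _ h =>
        obtain ⟨a, b, h, rfl, rfl⟩ := h
        exact .inr ⟨a, b, rfl, rfl, .rel _ _ h⟩
      | refl => exact .inl rfl
      | symm _ _ _ ih =>
        rcases ih with rfl | ⟨a, b, rfl, rfl, h⟩
        · exact .inl rfl
        · exact .inr ⟨b, a, rfl, rfl, h.symm⟩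
      | trans _ _ _ _ _ ih₁ ih₂ =>
        rcases ih₁ with rfl | ⟨a, b, rfl, rfl, h₁⟩
        · exact ih₂
        rcases ih₂ with rfl | ⟨b', c, hb, rfl, h₂⟩
        · exact .inr ⟨a, b, rfl, rfl, h₁⟩
        · exact .inr ⟨a, c, rfl, rfl, h₁.trans _ _ _ (hf hb ▸ h₂)⟩
    intro h
    rcases key _ _ h with hab | ⟨a', b', ha, hb, h⟩
    · exact hf hab ▸ .refl a
    · exact hf ha ▸ hf hb ▸ h
  · intro h
    induction h with
    | rel a b h => exact .rel _ _ ⟨a, b, h, rfl, rfl⟩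
    | refl => exact .refl _
    | symm _ _ _ ih => exact ih.symm
    | trans _ _ _ _ _ ih₁ ih₂ => exact ih₁.trans _ _ _ ih₂

lemma eqvGen_touches_mono {σ τ : Finset (Fin r → ℕ)} (h : σ ⊆ τ) {i j : Fin r}
    (hij : EqvGen (Touches σ) i j) : EqvGen (Touches τ) i j :=
  hij.mono fun _ _ ⟨a, ha, hi, hj⟩ => ⟨a, h ha, hi, hj⟩

lemma eqvGen_touches_filter {σ : Finset (Fin r → ℕ)} {S : Finset (Fin r)}
    (hS : ∀ a ∈ σ, ¬ Disjoint (supp a) S → supp a ⊆ S) {i j : Fin r}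
    (h : EqvGen (Touches σ) i j) (hij : i ∈ S ∨ j ∈ S) :
    i ∈ S ∧ j ∈ S ∧ EqvGen (Touches (σ.filter (supp · ⊆ S))) i j := by
  induction h with
  | rel i j h =>
    obtain ⟨a, ha, hi, hj⟩ := h
    have haS : supp a ⊆ S := hS a ha fun hd => by
      rcases hij with hiS | hjS
      · exact disjoint_left.mp hd (mem_supp.mpr hi) hiS
      · exact disjoint_left.mp hd (mem_supp.mpr hj) hjS
    exact ⟨haS (mem_supp.mpr hi), haS (mem_supp.mpr hj),
      .rel _ _ ⟨a, mem_filter.mpr ⟨ha, haS⟩, hi, hj⟩⟩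
  | refl i => exact ⟨hij.elim id id, hij.elim id id, .refl i⟩
  | symm _ _ _ ih =>
    obtain ⟨hj, hi, h⟩ := ih hij.symm
    exact ⟨hi, hj, h.symm⟩
  | trans _ _ _ _ _ ih₁ ih₂ =>
    rcases hij with hi | hk
    · obtain ⟨hi, hj, h₁⟩ := ih₁ (.inl hi)
      obtain ⟨-, hk, h₂⟩ := ih₂ (.inl hj)
      exact ⟨hi, hk, h₁.trans _ _ _ h₂⟩
    · obtain ⟨hj, hk, h₂⟩ := ih₂ (.inr hk)
      obtain ⟨hi, -, h₁⟩ := ih₁ (.inr hj)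
      exact ⟨hi, hk, h₁.trans _ _ _ h₂⟩

open Classical in
noncomputable def core (σ : Finset (Fin r → ℕ)) : Finset (Fin r) :=
  univ.filter fun i => ∃ a ∈ σ, ¬ IsType1 a ∧ ∃ j, a j ≠ 0 ∧ EqvGen (Touches σ) i j

lemma mem_core {σ : Finset (Fin r → ℕ)} {i : Fin r} :
    i ∈ core σ ↔ ∃ a ∈ σ, ¬ IsType1 a ∧ ∃ j, a j ≠ 0 ∧ EqvGen (Touches σ) i j := by
  simp [core]

lemma supp_subset_core_or {σ : Finset (Fin r → ℕ)} {a : Fin r → ℕ} (ha : a ∈ σ) :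
    supp a ⊆ core σ ∨ IsType1 a ∧ Disjoint (supp a) (core σ) := by
  by_cases htype : IsType1 a
  · by_cases hd : Disjoint (supp a) (core σ)
    · exact .inr ⟨htype, hd⟩
    obtain ⟨i₀, hi₀, hcore⟩ := not_disjoint_iff.mp hd
    obtain ⟨b, hb, hbtype, j, hj, hi₀j⟩ := mem_core.mp hcore
    refine .inl fun i hi => mem_core.mpr ⟨b, hb, hbtype, j, hj, ?_⟩
    exact (EqvGen.rel _ _ ⟨a, ha, mem_supp.mp hi, mem_supp.mp hi₀⟩).trans _ _ _ hi₀j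
  · exact .inl fun i hi => mem_core.mpr ⟨a, ha, htype, i, mem_supp.mp hi, .refl i⟩

lemma supp_subset_core_of_not_disjoint {σ : Finset (Fin r → ℕ)} :
    ∀ a ∈ σ, ¬ Disjoint (supp a) (core σ) → supp a ⊆ core σ := fun _ ha hd =>
  (supp_subset_core_or ha).resolve_right fun h => hd h.2

def NoType1Block (σ : Finset (Fin x → ℕ)) : Prop :=
  ∀ B : Set (Fin x), IsBlock σ B → ∃ a ∈ σ, SuppIn a B ∧ ¬ IsType1 a

end Blocks

section Glue

variable (e : Fin x ↪ Fin r)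

noncomputable def glue (E : Finset (Finset (Fin r))) (F' : Finset (Fin x → ℕ)) :
    Finset (Fin r → ℕ) :=
  mu r ∪ ((F' \ mu x).image (extendZero e) ∪ E.image ones)

variable {e} {E : Finset (Finset (Fin r))} {F' : Finset (Fin x → ℕ)}

lemma not_subset_of_mem_edges (hE : E ⊆ ((univ.map e)ᶜ).powersetCard 2) {t : Finset (Fin r)}
    (ht : t ∈ E) : ¬ t ⊆ univ.map e := fun htS => by
  obtain ⟨htSc, ht2⟩ := mem_powersetCard.mp (hE ht)
  obtain ⟨i, hi⟩ := card_pos.mp (show 0 < #t by omega)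
  exact mem_compl.mp (htSc hi) (htS hi)

lemma ones_notMem_image_extendZero (hE : E ⊆ ((univ.map e)ᶜ).powersetCard 2)
    {t : Finset (Fin r)} (ht : t ∈ E) {b : Fin x → ℕ} : extendZero e b ≠ ones t := fun h =>
  not_subset_of_mem_edges hE ht (by simpa using (mem_range_extendZero e).mp ⟨b, h⟩)

lemma disjoint_image_extendZero_image_ones (hE : E ⊆ ((univ.map e)ᶜ).powersetCard 2) :
    Disjoint ((F' \ mu x).image (extendZero e)) (E.image ones) :=
  disjoint_left.mpr fun a ha ha' => by
    obtain ⟨b, -, rfl⟩ := mem_image.mp ha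
    obtain ⟨t, ht, h⟩ := mem_image.mp ha'
    exact ones_notMem_image_extendZero hE ht h.symm

lemma glue_sdiff_mu (hE : E ⊆ ((univ.map e)ᶜ).powersetCard 2) :
    glue e E F' \ mu r = (F' \ mu x).image (extendZero e) ∪ E.image ones := by
  refine union_sdiff_cancel_left (disjoint_right.mpr fun a ha hmu => ?_)
  rcases mem_union.mp ha with ha | ha
  · obtain ⟨b, hb, rfl⟩ := mem_image.mp ha
    exact (mem_sdiff.mp hb).2 ((extendZero_mem_mu_iff e).mp hmu)
  · obtain ⟨t, ht, rfl⟩ := mem_image.mp ha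
    exact ones_notMem_mu (mem_powersetCard.mp (hE ht)).2 hmu

lemma card_glue (hE : E ⊆ ((univ.map e)ᶜ).powersetCard 2) (hmu : mu x ⊆ F') :
    #(glue e E F') = r + 1 + (#F' - (x + 1) + #E) := by
  have hsub : mu r ⊆ glue e E F' := subset_union_left
  rw [← card_sdiff_add_card_eq_card hsub, glue_sdiff_mu hE,
    card_union_of_disjoint (disjoint_image_extendZero_image_ones hE),
    card_image_of_injective _ (extendZero_injective e),
    card_image_of_injective _ ones_injective, card_sdiff_of_subset hmu, card_mu, card_mu]
  omega

lemma isFerrers_glue (hE : E ⊆ ((univ.map e)ᶜ).powersetCard 2) (hF' : IsFerrers F') :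
    IsFerrers (glue e E F') := by
  refine ⟨⟨0, mem_union_left _ zero_mem_mu⟩, fun a ha y hy => ?_⟩
  simp only [glue, mem_union, mem_image, mem_sdiff] at ha ⊢
  rcases ha with ha | ⟨b, ⟨hb, -⟩, rfl⟩ | ⟨t, ht, rfl⟩
  · exact .inl (mem_mu_of_le ha hy)
  · have hyS : supp y ⊆ univ.map e :=
      (supp_subset_of_le hy).trans (supp_extendZero_subset e b)
    have hyb : y ∘ e ≤ b := fun k => by simpa using hy (e k)
    rw [← extendZero_comp_of_supp_subset e hyS, extendZero_mem_mu_iff]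
    by_cases hymu : y ∘ e ∈ mu x
    · exact .inl hymu
    · exact .inr (.inl ⟨y ∘ e, ⟨hF'.2 b hb _ hyb, hymu⟩, rfl⟩)
  · rcases mem_mu_or_eq_of_le_ones (mem_powersetCard.mp (hE ht)).2 hy with hy | rfl
    · exact .inl hy
    · exact .inr (.inr ⟨t, ht, rfl⟩)

lemma restrict_glue (hE : E ⊆ ((univ.map e)ᶜ).powersetCard 2) (hmu : mu x ⊆ F') :
    restrict e (glue e E F') = F' := by
  ext b
  simp only [mem_restrict, glue, mem_union, mem_image, mem_sdiff, extendZero_mem_mu_iff,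
    (extendZero_injective e).eq_iff]
  constructor
  · rintro (hb | ⟨b', ⟨hb', -⟩, rfl⟩ | ⟨t, ht, h⟩)
    · exact hmu hb
    · exact hb'
    · exact absurd h.symm (ones_notMem_image_extendZero hE ht)
  · intro hb
    by_cases hbmu : b ∈ mu x
    · exact .inl hbmu
    · exact .inr (.inl ⟨b, ⟨hb, hbmu⟩, rfl⟩)

lemma filter_glue_sdiff_mu (hE : E ⊆ ((univ.map e)ᶜ).powersetCard 2) :
    (glue e E F' \ mu r).filter (supp · ⊆ univ.map e) = (F' \ mu x).image (extendZero e) := by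
  rw [glue_sdiff_mu hE, filter_union, filter_true_of_mem, filter_false_of_mem, union_empty]
  · simpa using fun t ht => not_subset_of_mem_edges hE ht
  · intro a ha
    obtain ⟨b, -, rfl⟩ := mem_image.mp ha
    exact supp_extendZero_subset e b

def edges (S : Finset (Fin r)) (σ : Finset (Fin r → ℕ)) : Finset (Finset (Fin r)) :=
  (σ.filter (¬ supp · ⊆ S)).image supp

lemma edges_glue (hE : E ⊆ ((univ.map e)ᶜ).powersetCard 2) :
    edges (univ.map e) (glue e E F' \ mu r) = E := by
  have hfilter : (glue e E F' \ mu r).filter (¬ supp · ⊆ univ.map e) = E.image ones := by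
    rw [filter_not, filter_glue_sdiff_mu hE, glue_sdiff_mu hE,
      union_sdiff_cancel_left (disjoint_image_extendZero_image_ones hE)]
  rw [edges, hfilter, image_image, show supp ∘ ones = id from funext supp_ones, image_id]

lemma core_glue (hE : E ⊆ ((univ.map e)ᶜ).powersetCard 2) (hF' : NoType1Block (F' \ mu x)) :
    core (glue e E F' \ mu r) = univ.map e := by
  have hclosed : ∀ a ∈ glue e E F' \ mu r, ¬ Disjoint (supp a) (univ.map e) →
      supp a ⊆ univ.map e := by
    intro a ha hd
    rcases mem_union.mp (glue_sdiff_mu hE ▸ ha) with ha | ha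
    · obtain ⟨b, -, rfl⟩ := mem_image.mp ha
      exact supp_extendZero_subset e b
    · obtain ⟨t, ht, rfl⟩ := mem_image.mp ha
      refine absurd ?_ hd
      simpa using subset_compl_iff_disjoint_right.mp (mem_powersetCard.mp (hE ht)).1
  ext i
  rw [mem_core]
  constructor
  · rintro ⟨a, ha, htype, j, hj, hij⟩
    have haS : supp a ⊆ univ.map e := by
      rcases mem_union.mp (glue_sdiff_mu hE ▸ ha) with ha' | ha'
      · obtain ⟨b, -, rfl⟩ := mem_image.mp ha'
        exact supp_extendZero_subset e b
      · obtain ⟨t, ht, rfl⟩ := mem_image.mp ha'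
        exact absurd (isType1_iff.mpr ⟨t, (mem_powersetCard.mp (hE ht)).2, rfl⟩) htype
    exact (eqvGen_touches_filter hclosed hij (.inr (haS (mem_supp.mpr hj)))).1
  · intro hi
    obtain ⟨k, -, rfl⟩ := mem_map.mp hi
    obtain ⟨b, hb, hbB, htype⟩ := hF' _ ⟨k, rfl⟩
    obtain ⟨j, hj⟩ : ∃ j, b j ≠ 0 := by
      by_contra! h
      exact (mem_sdiff.mp hb).2 (funext h ▸ zero_mem_mu)
    have hkj : EqvGen (Touches ((F' \ mu x).image (extendZero e))) (e k) (e j) := by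
      rw [touches_image_extendZero, eqvGen_map_iff e.injective]
      exact hbB j hj
    refine ⟨extendZero e b, ?_, (isType1_extendZero_iff e).not.mpr htype, e j, by simpa, ?_⟩
    · exact glue_sdiff_mu hE ▸ mem_union_left _ (mem_image_of_mem _ hb)
    · exact eqvGen_touches_mono (glue_sdiff_mu hE ▸ subset_union_left) hkj

end Glue

section Split

variable (σ : Finset (Fin r → ℕ))

lemma isType1_of_not_supp_subset_core {a : Fin r → ℕ}
    (ha : a ∈ σ.filter (¬ supp · ⊆ core σ)) :
    IsType1 a ∧ Disjoint (supp a) (core σ) :=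
  (supp_subset_core_or (mem_filter.mp ha).1).resolve_left (mem_filter.mp ha).2

lemma edges_core_subset : edges (core σ) σ ⊆ ((core σ)ᶜ).powersetCard 2 := by
  intro t ht
  obtain ⟨a, ha, rfl⟩ := mem_image.mp ht
  obtain ⟨htype, hd⟩ := isType1_of_not_supp_subset_core σ ha
  exact mem_powersetCard.mpr ⟨subset_compl_iff_disjoint_right.mpr hd, IsType1.card_supp htype⟩

lemma image_ones_edges_core :
    (edges (core σ) σ).image ones = σ.filter (¬ supp · ⊆ core σ) := by
  rw [edges, image_image, image_congr (g := id) fun a ha => ?_, image_id]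
  exact IsType1.ones_supp (isType1_of_not_supp_subset_core σ ha).1

lemma card_edges_core_add : #(edges (core σ) σ) + #(σ.filter (supp · ⊆ core σ)) = #σ := by
  rw [← card_image_of_injective _ ones_injective, image_ones_edges_core, add_comm,
    card_filter_add_card_filter_not]

variable {e : Fin x ↪ Fin r} {F : Finset (Fin r → ℕ)}

lemma isFerrers_restrict (hF : IsFerrers F) : IsFerrers (restrict e F) := by
  obtain ⟨a, ha⟩ := hF.1
  refine ⟨⟨0, ?_⟩, fun b hb y hy => ?_⟩
  · rw [mem_restrict, ← ones_empty, extendZero_ones, map_empty, ones_empty]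
    exact hF.2 a ha 0 fun i => Nat.zero_le _
  · exact mem_restrict.mpr (hF.2 _ (mem_restrict.mp hb) _ (extendZero_mono e hy))

lemma mu_subset_restrict (hmu : mu r ⊆ F) : mu x ⊆ restrict e F := fun _ hb =>
  mem_restrict.mpr (hmu ((extendZero_mem_mu_iff e).mpr hb))

lemma image_extendZero_restrict_sdiff_mu :
    (restrict e F \ mu x).image (extendZero e) = (F \ mu r).filter (supp · ⊆ univ.map e) := by
  ext a
  simp only [mem_image, mem_sdiff, mem_filter, mem_restrict]
  constructor
  · rintro ⟨b, ⟨hb, hbmu⟩, rfl⟩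
    exact ⟨⟨hb, (extendZero_mem_mu_iff e).not.mpr hbmu⟩, supp_extendZero_subset e b⟩
  · rintro ⟨⟨ha, hamu⟩, haS⟩
    rw [← extendZero_comp_of_supp_subset e haS] at ha hamu ⊢
    exact ⟨a ∘ e, ⟨ha, (extendZero_mem_mu_iff e).not.mp hamu⟩, rfl⟩

lemma card_restrict (hmu : mu r ⊆ F) :
    #(restrict e F) = #((F \ mu r).filter (supp · ⊆ univ.map e)) + x + 1 := by
  rw [← image_extendZero_restrict_sdiff_mu, card_image_of_injective _ (extendZero_injective e),
    card_sdiff_of_subset (mu_subset_restrict hmu), card_mu]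
  have := card_le_card (mu_subset_restrict (e := e) hmu)
  rw [card_mu] at this
  omega

lemma noType1Block_restrict (hcore : core (F \ mu r) = univ.map e) :
    NoType1Block (restrict e F \ mu x) := by
  have hclosed := supp_subset_core_of_not_disjoint (σ := F \ mu r)
  rw [hcore] at hclosed
  rintro _ ⟨k, rfl⟩
  obtain ⟨a, ha, htype, j, hj, hkj⟩ := mem_core.mp (hcore ▸ mem_map_of_mem e (mem_univ k))
  have haS : supp a ⊆ univ.map e := hcore ▸ (supp_subset_core_or ha).resolve_right (htype ·.1)
  obtain ⟨b, hb, rfl⟩ : ∃ b ∈ restrict e F \ mu x, extendZero e b = a := by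
    rw [← mem_image, image_extendZero_restrict_sdiff_mu]
    exact mem_filter.mpr ⟨ha, haS⟩
  refine ⟨b, hb, fun l hl => ?_, (isType1_extendZero_iff e).not.mp htype⟩
  have hkl : EqvGen (Touches (F \ mu r)) (e k) (e l) :=
    hkj.trans _ _ _ (.symm _ _ (.rel _ _ ⟨_, ha, by simpa using hl, hj⟩))
  have := (eqvGen_touches_filter hclosed hkl (.inl (mem_map_of_mem e (mem_univ k)))).2.2
  rwa [← image_extendZero_restrict_sdiff_mu, touches_image_extendZero,
    eqvGen_map_iff e.injective] at this

lemma glue_edges_restrict (hmu : mu r ⊆ F) (hcore : core (F \ mu r) = univ.map e) :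
    glue e (edges (univ.map e) (F \ mu r)) (restrict e F) = F := by
  rw [glue, image_extendZero_restrict_sdiff_mu, ← hcore, image_ones_edges_core,
    filter_union_filter_not_eq, union_sdiff_of_subset hmu]

end Split

section Counting

lemma apply_lt_card {F : Finset (Fin r → ℕ)} (hF : IsFerrers F) {a : Fin r → ℕ}
    (ha : a ∈ F) (i : Fin r) : a i < #F := by
  have hsub : (range (a i + 1)).image (Pi.single i) ⊆ F := by
    intro y hy
    obtain ⟨c, hc, rfl⟩ := mem_image.mp hy
    refine hF.2 a ha _ fun j => ?_
    rcases eq_or_ne j i with rfl | hj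
    · simpa [Nat.lt_succ_iff] using hc
    · simp [hj]
  have := card_le_card hsub
  rwa [card_image_of_injective _ (Pi.single_injective i), card_range, Nat.succ_le_iff] at this

lemma finite_setOf_isFerrers (r n : ℕ) :
    {F : Finset (Fin r → ℕ) | IsFerrers F ∧ #F = n}.Finite := by
  refine (finite_toSet (Fintype.piFinset fun _ => range n).powerset).subset ?_
  rintro F ⟨hF, rfl⟩
  rw [mem_coe, mem_powerset]
  intro a ha
  simpa [Fintype.mem_piFinset] using apply_lt_card hF ha

lemma isStrict_iff_mu_subset {F : Finset (Fin r → ℕ)} (hF : IsFerrers F) :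
    IsStrict F ↔ mu r ⊆ F := by
  constructor
  · intro hstrict b hb
    rcases mem_insert.mp hb with rfl | hb
    · obtain ⟨a, ha⟩ := hF.1
      exact hF.2 a ha 0 fun i => Nat.zero_le _
    · obtain ⟨i, -, rfl⟩ := mem_image.mp hb
      obtain ⟨a, ha, hai⟩ := hstrict i
      refine hF.2 a ha _ fun j => ?_
      rcases eq_or_ne j i with rfl | hj
      · simpa [Nat.one_le_iff_ne_zero] using hai
      · simp [hj]
  · exact fun hmu i => ⟨Pi.single i 1, hmu (single_mem_mu i), by simp⟩

def fDiagrams (n x : ℕ) : Set (Finset (Fin x → ℕ)) :=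
  {F | IsFerrers F ∧ mu x ⊆ F ∧ #F = n ∧ NoType1Block (F \ mu x)}

instance (n x : ℕ) : Finite (fDiagrams n x) :=
  ((finite_setOf_isFerrers x n).subset fun _ hF => ⟨hF.1, hF.2.2.1⟩).to_subtype

lemma card_fDiagrams (n x : ℕ) : Nat.card (fDiagrams n x) = Fmat n x := rfl

noncomputable def emb (S : Finset (Fin r)) : Fin #S ↪ Fin r := (S.orderEmbOfFin rfl).toEmbedding

lemma map_emb (S : Finset (Fin r)) : univ.map (emb S) = S := map_orderEmbOfFin_univ S rfl

-- `p` is the number of points of the skew diagram supported in `S`.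
abbrev Decomposition (m r : ℕ) : Type :=
  Σ S : Finset (Fin r), Σ p : Fin (m + 1),
    ((Sᶜ).powersetCard 2).powersetCard (m - p) × fDiagrams (p + #S + 1) #S

lemma card_decomposition (m r : ℕ) :
    Nat.card (Decomposition m r) = ∑ x ∈ range (r + 1), ∑ p ∈ range (m + 1),
      r.choose x * ((r - x).choose 2).choose (m - p) * Fmat (p + x + 1) x := by
  simp only [Nat.card_sigma, Nat.card_prod, Nat.card_eq_fintype_card, Fintype.card_coe,
    card_powersetCard, card_compl, Fintype.card_fin, card_fDiagrams]
  rw [← powerset_univ, sum_powerset_apply_card (fun x => ∑ p : Fin (m + 1),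
    ((r - x).choose 2).choose (m - p) * Fmat (p + x + 1) x), card_univ, Fintype.card_fin]
  refine sum_congr rfl fun x _ => ?_
  rw [smul_eq_mul, Fin.sum_univ_eq_sum_range (fun p => ((r - x).choose 2).choose (m - p) *
    Fmat (p + x + 1) x), mul_sum]
  simp only [mul_assoc]

def muDiagrams (n r : ℕ) : Set (Finset (Fin r → ℕ)) :=
  {F | IsFerrers F ∧ mu r ⊆ F ∧ #F = n}

lemma amat_eq_card_muDiagrams (n r : ℕ) : Amat n r = Nat.card (muDiagrams n r) :=
  Nat.card_congr (Equiv.subtypeEquivRight fun _ => and_congr_right fun hF =>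
    and_congr_left' (isStrict_iff_mu_subset hF))

end Counting

section Bijection

variable {m : ℕ}

lemma subset_powersetCard_compl_map_emb {S : Finset (Fin r)} {k : ℕ}
    (E : ((Sᶜ).powersetCard 2).powersetCard k) :
    (E : Finset (Finset (Fin r))) ⊆ ((univ.map (emb S))ᶜ).powersetCard 2 := by
  rw [map_emb]
  exact (mem_powersetCard.mp E.2).1

noncomputable def glueMap : Decomposition m r → muDiagrams (m + r + 1) r
  | ⟨S, p, E, F', hF'⟩ =>
    have hE := subset_powersetCard_compl_map_emb E
    ⟨glue (emb S) E F', isFerrers_glue hE hF'.1, subset_union_left, by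
      rw [card_glue hE hF'.2.1, hF'.2.2.1, (mem_powersetCard.mp E.2).2]
      have := p.isLt
      omega⟩

lemma glueMap_injective : Injective (glueMap (m := m) (r := r)) := by
  rintro ⟨S₁, p₁, E₁, F₁, hF₁⟩ ⟨S₂, p₂, E₂, F₂, hF₂⟩ h
  have hg : glue (emb S₁) E₁ F₁ = glue (emb S₂) E₂ F₂ := congrArg Subtype.val h
  have hE₁ := subset_powersetCard_compl_map_emb E₁
  have hE₂ := subset_powersetCard_compl_map_emb E₂
  obtain rfl : S₁ = S₂ := by
    rw [← map_emb S₁, ← core_glue hE₁ hF₁.2.2.2, hg, core_glue hE₂ hF₂.2.2.2, map_emb]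
  obtain rfl : F₁ = F₂ := by
    rw [← restrict_glue hE₁ hF₁.2.1, hg, restrict_glue hE₂ hF₂.2.1]
  obtain rfl : p₁ = p₂ := Fin.ext (by have := hF₁.2.2.1.symm.trans hF₂.2.2.1; omega)
  obtain rfl : E₁ = E₂ := Subtype.ext (by rw [← edges_glue hE₁, hg, edges_glue hE₂])
  rfl

lemma glueMap_surjective : Surjective (glueMap (m := m) (r := r)) := by
  rintro ⟨F, hF, hmu, hcard⟩
  obtain ⟨S, hS⟩ : ∃ S, core (F \ mu r) = S := ⟨_, rfl⟩
  have hcore : core (F \ mu r) = univ.map (emb S) := by rw [hS, map_emb]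
  have hσ : #(F \ mu r) = m := by rw [card_sdiff_of_subset hmu, hcard, card_mu]; omega
  have hsplit := card_edges_core_add (F \ mu r)
  have hF' := card_restrict (e := emb S) hmu
  rw [← hcore, hS] at hF'
  rw [hS] at hsplit
  refine ⟨⟨S, ⟨#((F \ mu r).filter (supp · ⊆ S)), by omega⟩,
    ⟨edges S (F \ mu r),
      mem_powersetCard.mpr ⟨hS ▸ edges_core_subset _, by simp only; omega⟩⟩,
    restrict (emb S) F, isFerrers_restrict hF, mu_subset_restrict hmu, hF',
    noType1Block_restrict hcore⟩, Subtype.ext ?_⟩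
  have := glue_edges_restrict hmu hcore
  rwa [← hcore, hS] at this

end Bijection

end FerrersDecomposition

/-- `a_{m+r+1,r} = Σ_{x=0}^{r} Σ_{p=0}^{m} C(r,x) · C(C(r−x,2), m−p) · f_{p+x+1,x}`. -/
theorem statement12 (m r : ℕ) :
    Amat (m + r + 1) r =
      ∑ x ∈ Finset.range (r + 1), ∑ p ∈ Finset.range (m + 1),
        Nat.choose r x * Nat.choose (Nat.choose (r - x) 2) (m - p) * Fmat (p + x + 1) x := by
  open FerrersDecomposition in
  rw [amat_eq_card_muDiagrams,
    ← Nat.card_congr (Equiv.ofBijective _ ⟨glueMap_injective, glueMap_surjective⟩),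
    card_decomposition]
end
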